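/- Let ι be a nonempty finite index set of cardinality n, let ε_S ≥ 0 and ε_R ≥ 0 be real numbers, and let a, b, v, c : ι → ℝ be functions satisfying: (i) ∑_{i ∈ ι} a i ≤ ε_R + ∑_{i ∈ ι} b i; (ii) v i ≤ a i for every i; (iii) v i ≤ b i ≤ ε_S + v i for every i; and (iv) 0 ≤ c i ≤ 1 for every i. Then ∑_{i ∈ ι} c i * a i ≤ (n - 1) * ε_S + ε_R + ∑_{i ∈ ι} c i * b i. -/
import Mathlib


/-- Lemma 2 of the paper in abstract numerical form. -/
theorem recovery_game_value_bound
    {ι : Type*} [Fintype ι] [Nonempty ι]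
    (εS εR : ℝ) (hεS : 0 ≤ εS) (hεR : 0 ≤ εR)
    (a b v c : ι → ℝ)
    (hab : ∑ i, a i ≤ εR + ∑ i, b i)
    (hva : ∀ i, v i ≤ a i)
    (hvb : ∀ i, v i ≤ b i) (hbv : ∀ i, b i ≤ εS + v i)
    (hc0 : ∀ i, 0 ≤ c i) (hc1 : ∀ i, c i ≤ 1) :
    ∑ i, c i * a i ≤ ((Fintype.card ι : ℝ) - 1) * εS + εR + ∑ i, c i * b i := by
  classical
  set d : ι → ℝ := fun i => a i - b i with hd
  have key : ∑ i, c i * d i ≤ ((Fintype.card ι : ℝ) - 1) * εS + εR := by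
    have hcard : (1 : ℝ) ≤ (Fintype.card ι : ℝ) := by
      exact_mod_cast Fintype.card_pos
    by_cases hpos : ∃ i0, 0 ≤ d i0
    · obtain ⟨i0, hi0⟩ := hpos
      have h1 : ∑ i, c i * d i ≤ ∑ i, max (d i) 0 := by
        apply Finset.sum_le_sum
        intro i _
        rcases le_or_gt 0 (d i) with h | h
        · calc c i * d i ≤ 1 * d i := by
                exact mul_le_mul_of_nonneg_right (hc1 i) h
            _ = d i := one_mul _
            _ ≤ max (d i) 0 := le_max_left _ _
        · calc c i * d i ≤ 0 := mul_nonpos_of_nonneg_of_nonpos (hc0 i) h.le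
            _ ≤ max (d i) 0 := le_max_right _ _
      have h2 : ∀ i, max (d i) 0 = d i + max (-(d i)) 0 := by
        intro i
        rcases le_or_gt 0 (d i) with h | h
        · rw [max_eq_left h, max_eq_right (by linarith), add_zero]
        · rw [max_eq_right h.le, max_eq_left (by linarith)]; ring
      have h3 : ∑ i, max (d i) 0 = ∑ i, d i + ∑ i, max (-(d i)) 0 := by
        simp_rw [h2]; rw [Finset.sum_add_distrib]
      have h4 : ∑ i, d i ≤ εR := by
        simp only [hd, Finset.sum_sub_distrib]
        linarith
      have h5 : ∑ i, max (-(d i)) 0 ≤ ((Fintype.card ι : ℝ) - 1) * εS := by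
        rw [Finset.sum_eq_sum_sdiff_singleton_add (Finset.mem_univ i0)]
        have hterm : max (-(d i0)) 0 = 0 := max_eq_right (by linarith)
        rw [hterm, add_zero]
        calc ∑ i ∈ Finset.univ \ {i0}, max (-(d i)) 0
            ≤ ∑ _i ∈ Finset.univ \ {i0}, εS := by
              apply Finset.sum_le_sum
              intro i _
              have := hva i; have := hvb i; have := hbv i
              simp only [hd]
              rcases le_or_gt 0 (d i) with h | h
              · rw [max_eq_right (by simpa [hd] using neg_nonpos_of_nonneg h)]
                exact hεS
              · rw [max_eq_left (neg_nonneg.mpr h.le)]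
                have hdi : d i = a i - b i := rfl
                linarith
          _ = ((Fintype.card ι : ℝ) - 1) * εS := by
              rw [Finset.sum_const, nsmul_eq_mul]
              congr 1
              rw [Finset.sdiff_singleton_eq_erase, Finset.card_erase_of_mem (Finset.mem_univ i0)]
              rw [Finset.card_univ, Nat.cast_sub Fintype.card_pos, Nat.cast_one]
      linarith
    · push_neg at hpos
      have h1 : ∑ i, c i * d i ≤ 0 := by
        apply Finset.sum_nonpos
        intro i _
        exact mul_nonpos_of_nonneg_of_nonpos (hc0 i) (hpos i).le
      nlinarith
  have : ∑ i, c i * d i = ∑ i, c i * a i - ∑ i, c i * b i := by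
    simp only [hd, mul_sub, Finset.sum_sub_distrib]
  linarith
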